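/- Let c ≠ 0, kappa > 0, 0 < mu < 1, and tau_0 > 0. There exists a constant C > 0 depending only on c, kappa, tau_0 such that for all real tau with 0 < |tau| < tau_0 and all j in {0,1,2}: sup over real k of (1+k^2)^{j/2} / |c^2 (k + i tau)^2 - kappa(1+mu)| ≤ C / |tau|. -/

import Mathlib

/-!
Write `b = κ(1+μ)` and `a = √b / |c|`, so that `c²z² - b = c²(z - a)(z + a)`.
For `z = k + iτ` both factors have modulus at least `|τ|`, and one of them has modulus at
least `a`, so `|z² - a²| ≥ a|τ|`; this controls bounded `k`. For large `k` the real part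
`k² - τ² - a²` of `z² - a²` is at least `k²/2`, which beats `|τ|(1 + k²) ≤ τ₀(1 + k²)`.
-/

namespace Complex

theorem mul_abs_im_le_norm_sq_sub_sq (z : ℂ) (a : ℝ) :
    a * |z.im| ≤ ‖z ^ 2 - (a : ℂ) ^ 2‖ := by
  have him_add : |z.im| ≤ ‖z + a‖ := by simpa using abs_im_le_norm (z + a)
  have him_sub : |z.im| ≤ ‖z - a‖ := by simpa using abs_im_le_norm (z - a)
  have hre_add : |z.re + a| ≤ ‖z + a‖ := by simpa using abs_re_le_norm (z + a)
  have hre_sub : |z.re - a| ≤ ‖z - a‖ := by simpa using abs_re_le_norm (z - a)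
  rw [sq_sub_sq, norm_mul]
  rcases le_total 0 z.re with hre | hre
  · have : a ≤ ‖z + a‖ := (le_abs.mpr (Or.inl (by linarith))).trans hre_add
    exact mul_le_mul this him_sub (abs_nonneg _) (norm_nonneg _)
  · have : a ≤ ‖z - a‖ := (le_abs.mpr (Or.inr (by linarith))).trans hre_sub
    rw [mul_comm (‖z + a‖)]
    exact mul_le_mul this him_add (abs_nonneg _) (norm_nonneg _)

theorem re_sq_sub_im_sq_sub_sq_le_norm (z : ℂ) (a : ℝ) :
    z.re ^ 2 - z.im ^ 2 - a ^ 2 ≤ ‖z ^ 2 - (a : ℂ) ^ 2‖ := by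
  have hre : (z ^ 2 - (a : ℂ) ^ 2).re = z.re ^ 2 - z.im ^ 2 - a ^ 2 := by
    simp [sq]
  exact hre ▸ re_le_norm _

theorem exists_abs_im_mul_one_add_re_sq_le_norm_sq_sub_sq {a T : ℝ} (ha : 0 < a)
    (hT : 0 ≤ T) :
    ∃ C > 0, ∀ z : ℂ, |z.im| ≤ T → |z.im| * (1 + z.re ^ 2) ≤ C * ‖z ^ 2 - (a : ℂ) ^ 2‖ := by
  -- beyond `re² = K`, `1 + re² ≤ 2 re²` and `re² - im² - a² ≥ re² / 2`
  set K := 1 + 2 * (T ^ 2 + a ^ 2)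
  refine ⟨(1 + K) / a + 4 * T, by positivity, fun z hz => ?_⟩
  have hnear := mul_abs_im_le_norm_sq_sub_sq z a
  have hfar := re_sq_sub_im_sq_sub_sq_le_norm z a
  have him_sq : z.im ^ 2 ≤ T ^ 2 := sq_le_sq' (abs_le.mp hz).1 (abs_le.mp hz).2
  have hnorm := norm_nonneg (z ^ 2 - (a : ℂ) ^ 2)
  rcases le_total (z.re ^ 2) K with hK | hK
  · calc |z.im| * (1 + z.re ^ 2) ≤ (1 + K) / a * (a * |z.im|) := by
          rw [← mul_assoc, div_mul_cancel₀ _ ha.ne']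
          nlinarith [abs_nonneg z.im]
      _ ≤ (1 + K) / a * ‖z ^ 2 - (a : ℂ) ^ 2‖ := by gcongr
      _ ≤ _ := by nlinarith
  · have hhalf : z.re ^ 2 / 2 ≤ ‖z ^ 2 - (a : ℂ) ^ 2‖ := by nlinarith
    calc |z.im| * (1 + z.re ^ 2) ≤ T * (2 * z.re ^ 2) := by
          gcongr
          nlinarith
      _ ≤ 4 * T * ‖z ^ 2 - (a : ℂ) ^ 2‖ := by nlinarith
      _ ≤ _ := by
          gcongr
          linarith [show 0 < (1 + K) / a by positivity]

theorem exists_abs_im_mul_one_add_re_sq_le_norm {c b T : ℝ} (hc : c ≠ 0) (hb : 0 < b)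
    (hT : 0 ≤ T) :
    ∃ C > 0, ∀ z : ℂ, |z.im| ≤ T →
      |z.im| * (1 + z.re ^ 2) ≤ C * ‖(c : ℂ) ^ 2 * z ^ 2 - b‖ := by
  set a := √b / |c|
  have hc2 : 0 < c ^ 2 := by positivity
  obtain ⟨C, hC, hbound⟩ :=
    exists_abs_im_mul_one_add_re_sq_le_norm_sq_sub_sq (a := a) (by positivity) hT
  have ha_sq : c ^ 2 * a ^ 2 = b := by
    rw [div_pow, sq_abs, Real.sq_sqrt hb.le, mul_div_cancel₀ _ hc2.ne']
  refine ⟨C / c ^ 2, by positivity, fun z hz => ?_⟩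
  have hfactor : (c : ℂ) ^ 2 * z ^ 2 - b = (c : ℂ) ^ 2 * (z ^ 2 - (a : ℂ) ^ 2) := by
    rw [← ha_sq]
    push_cast
    ring
  rw [hfactor, norm_mul, norm_pow, norm_real, Real.norm_eq_abs, sq_abs, ← mul_assoc,
    div_mul_cancel₀ _ hc2.ne']
  exact hbound z hz

end Complex

theorem stmt8 (c κ μ τ₀ : ℝ) (hc : c ≠ 0) (hκ : 0 < κ) (hμ : 0 < μ)
    (hτ₀ : 0 < τ₀) :
    ∃ C > 0, ∀ τ : ℝ, 0 < |τ| → |τ| < τ₀ → ∀ j : ℕ, j ≤ 2 → ∀ k : ℝ,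
      (1 + k^2) ^ ((j:ℝ)/2) /
          ‖(c:ℂ)^2 * ((k:ℂ) + (τ:ℂ)*Complex.I)^2 - (κ:ℂ)*(1+(μ:ℂ))‖
        ≤ C / |τ| := by
  obtain ⟨C, hC, hbound⟩ :=
    Complex.exists_abs_im_mul_one_add_re_sq_le_norm hc (b := κ * (1 + μ)) (by positivity) hτ₀.le
  refine ⟨C, hC, fun τ hτ hττ₀ j hj k => ?_⟩
  set M := ‖(c:ℂ)^2 * ((k:ℂ) + (τ:ℂ)*Complex.I)^2 - (κ:ℂ)*(1+(μ:ℂ))‖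
  have hkτ : |τ| * (1 + k ^ 2) ≤ C * M := by
    simpa [M] using hbound (k + τ * Complex.I) (by simpa using hττ₀.le)
  have hM : 0 < M := pos_of_mul_pos_right ((mul_pos hτ (by positivity)).trans_le hkτ) hC.le
  calc (1 + k ^ 2) ^ ((j : ℝ) / 2) / M ≤ (1 + k ^ 2) / M := by
        gcongr
        refine Real.rpow_le_self_of_one_le (by nlinarith) ?_
        rw [div_le_one two_pos]
        exact_mod_cast hj
    _ ≤ C / |τ| := by
        rw [div_le_div_iff₀ hM hτ]
        linarith
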